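/- Let f : ℝ² → ℝ be given by f(x,y) = ∑_{n=1}^{∞} (1/n²) · exp(−π(n²x² + y²/n²)). Then the restriction of f to the line x = 0, i.e. the function y ↦ f(0,y) = ∑_{n=1}^{∞} (1/n²) · exp(−π y²/n²), is not integrable (not L¹) on ℝ with respect to Lebesgue measure. -/

import Mathlib

open MeasureTheory Complex
open scoped ComplexOrder

noncomputable section

/-- The function `f(x,y) = ∑_{n=1}^∞ (1/n²) exp(-π (n² x² + y²/n²))` on `ℝ²`. -/
def borisovExample (p : ℝ × ℝ) : ℝ :=
  ∑' n : ℕ, (1 / ((n : ℝ) + 1) ^ 2) *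
    Real.exp (-(Real.pi) * (((n : ℝ) + 1) ^ 2 * p.1 ^ 2 + p.2 ^ 2 / ((n : ℝ) + 1) ^ 2))

/-!
On the line `x = 0` the `n`-th term is a Gaussian of width `n` and height `1/n²`, so its
integral is `1/n`. The terms are nonnegative, hence an integrable sum would bound every partial
sum of the harmonic series.
-/

theorem not_integrable_tsum_of_not_summable_integral {α ι : Type*} [MeasurableSpace α]
    {μ : Measure α} {g : ι → α → ℝ} (hg_nonneg : ∀ i x, 0 ≤ g i x)
    (hg_int : ∀ i, Integrable (g i) μ) (hg_sum : ∀ x, Summable fun i => g i x)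
    (h_div : ¬ Summable fun i => ∫ x, g i x ∂μ) :
    ¬ Integrable (fun x => ∑' i, g i x) μ := by
  intro hf
  refine h_div (summable_of_sum_le (c := ∫ x, ∑' i, g i x ∂μ)
    (fun i => integral_nonneg (hg_nonneg i)) fun u => ?_)
  rw [← integral_finsetSum u fun i _ => hg_int i]
  exact integral_mono (integrable_finsetSum u fun i _ => hg_int i) hf fun x =>
    (hg_sum x).sum_le_tsum u fun i _ => hg_nonneg i x

theorem integral_one_div_sq_mul_exp_neg_pi_div_sq {c : ℝ} (hc : 0 < c) :
    ∫ y : ℝ, 1 / c ^ 2 * Real.exp (-(Real.pi / c ^ 2) * y ^ 2) = 1 / c := by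
  rw [integral_const_mul, integral_gaussian, div_div_cancel₀ Real.pi_ne_zero, Real.sqrt_sq hc.le]
  field_simp

theorem borisovExample_zero_fst (y : ℝ) :
    borisovExample (0, y) =
      ∑' n : ℕ, 1 / ((n : ℝ) + 1) ^ 2 * Real.exp (-(Real.pi / ((n : ℝ) + 1) ^ 2) * y ^ 2) := by
  refine tsum_congr fun n => ?_
  congr 2
  ring

theorem summable_one_div_sq_mul_exp_neg_pi_div_sq (y : ℝ) :
    Summable fun n : ℕ =>
      1 / ((n : ℝ) + 1) ^ 2 * Real.exp (-(Real.pi / ((n : ℝ) + 1) ^ 2) * y ^ 2) := by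
  have h_sq : Summable fun n : ℕ => 1 / ((n : ℝ) + 1) ^ 2 := by
    exact_mod_cast (summable_nat_add_iff 1).mpr (Real.summable_one_div_nat_pow.mpr one_lt_two)
  refine h_sq.of_nonneg_of_le (fun n => by positivity) fun n => ?_
  refine mul_le_of_le_one_right (by positivity) (Real.exp_le_one_iff.mpr ?_)
  have : 0 ≤ Real.pi / ((n : ℝ) + 1) ^ 2 * y ^ 2 := by positivity
  linarith

theorem not_summable_one_div_nat_succ : ¬ Summable fun n : ℕ => 1 / ((n : ℝ) + 1) := by
  exact_mod_cast (summable_nat_add_iff 1).not.mpr Real.not_summable_one_div_natCast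

/-- The restriction of `f(x,y) = ∑_{n=1}^∞ (1/n²) exp(-π(n²x² + y²/n²))` to the
line `x = 0`, i.e. `y ↦ f(0,y) = ∑_{n=1}^∞ (1/n²) exp(-π y²/n²)`, is not Lebesgue-integrable
on `ℝ`. -/
theorem borisovExample_restriction_not_integrable :
    ¬ Integrable (fun y : ℝ => borisovExample (0, y)) (volume : Measure ℝ) := by
  simp only [borisovExample_zero_fst]
  refine not_integrable_tsum_of_not_summable_integral (fun n y => by positivity)
    (fun n => (integrable_exp_neg_mul_sq (by positivity)).const_mul _)
    summable_one_div_sq_mul_exp_neg_pi_div_sq ?_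
  simpa only [integral_one_div_sq_mul_exp_neg_pi_div_sq (Nat.cast_add_one_pos _)]
    using not_summable_one_div_nat_succ

end
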